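/- arXiv:2504.17244 — 2 statements merged into one kernel-verified Lean document; each statement's English description precedes it below -/
import Mathlib

section
/- For the service rate region S_i(n,k), the maximal achievable demand λ_j^max = max{λ_j : λ ∈ S_i(n,k)} satisfies: λ_j^max = 1 + (n−1)/k if j ≤ i and n ≥ k+1; λ_j^max = 1 if j ≤ i and n = k; and λ_j^max = n/k if j > i. -/
open Matrix

/-- `R ⊆ [n]` is a recovery set for object `j` under generator matrix `G`:
the standard basis vector `e_j` lies in the span of the columns of `G` indexed by `R`,
and minimally so. -/
def IsRecoverySet {F : Type*} [Field F] {k n : ℕ} (G : Matrix (Fin k) (Fin n) F)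
    (j : Fin k) (R : Finset (Fin n)) : Prop :=
  (Pi.single j 1 : Fin k → F) ∈ Submodule.span F (Gᵀ '' (R : Set (Fin n))) ∧
    ∀ S : Finset (Fin n), S ⊂ R →
      (Pi.single j 1 : Fin k → F) ∉ Submodule.span F (Gᵀ '' (S : Set (Fin n)))

/-- A valid allocation of request rates `lam` to recovery sets: nonnegative weights
`w j R` supported on recovery sets, summing to `lam j` for each object `j`, and
loading each server `l` by at most its unit capacity. -/
def IsValidAllocation {F : Type*} [Field F] {k n : ℕ} (G : Matrix (Fin k) (Fin n) F)
    (lam : Fin k → ℝ) (w : Fin k → Finset (Fin n) → ℝ) : Prop :=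
  (∀ j R, 0 ≤ w j R) ∧
  (∀ j R, ¬ IsRecoverySet G j R → w j R = 0) ∧
  (∀ j, ∑ R : Finset (Fin n), w j R = lam j) ∧
  (∀ l : Fin n, ∑ j : Fin k, ∑ R ∈ Finset.univ.filter (fun R : Finset (Fin n) => l ∈ R),
      w j R ≤ 1)

/-- The service rate region of `G`. -/
def ServiceRegion {F : Type*} [Field F] {k n : ℕ} (G : Matrix (Fin k) (Fin n) F) :
    Set (Fin k → ℝ) :=
  {lam | (∀ j, 0 ≤ lam j) ∧ ∃ w, IsValidAllocation G lam w}

/-- `Gmat M i` = the `k × n` matrix formed by the `i` leftmost (systematic) columns of `M`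
followed by the `n - i` rightmost (parity) columns of `M`. -/
def Gmat {F : Type*} [Field F] {k n : ℕ} (M : Matrix (Fin k) (Fin (k + n)) F) (i : ℕ) :
    Matrix (Fin k) (Fin n) F :=
  Matrix.of fun r l =>
    if (l : ℕ) < i then M r ⟨(l : ℕ), by have := l.isLt; omega⟩
    else M r ⟨k + (l : ℕ), by have := l.isLt; omega⟩

/-!
The columns of `Gmat M i` are distinct columns of the MDS matrix `M`. Hence a recovery set for
`e_j` is either the single systematic column `e_j` (present iff `j < i`) or has at least `k`
elements, and any `k` columns other than `e_j` form one. Summing the unit server capacities gives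
`∑_R w_R |R| ≤ n`, which bounds the demand for `j` by `n / k`, or by `1 + (n - 1) / k` once the
singleton, of weight at most `1`, is split off; when `n = k` no other recovery set fits beside
the systematic server. Spreading weight uniformly over the `k`-subsets of the remaining servers
attains these bounds.
-/

open Finset Submodule

def Matrix.IsMDS {F : Type*} [Field F] {k m : ℕ} (M : Matrix (Fin k) (Fin m) F) : Prop :=
  ∀ S : Finset (Fin m), #S = k → LinearIndependent F fun l : S => Mᵀ l

section Columns

variable {F : Type*} [Field F] {k m : ℕ} {M : Matrix (Fin k) (Fin m) F}

theorem linearIndepOn_col_of_card_le (hkm : k ≤ m)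
    (hM : M.IsMDS)
    {T : Finset (Fin m)} (hT : #T ≤ k) : LinearIndepOn F M.col (T : Set (Fin m)) := by
  obtain ⟨S, hTS, hS⟩ := exists_superset_card_eq hT (by simpa using hkm)
  exact LinearIndepOn.mono (hM S hS) (coe_subset.2 hTS)

theorem col_notMem_span_image (hkm : k ≤ m)
    (hM : M.IsMDS)
    {T : Finset (Fin m)} (hT : #T < k) {a : Fin m} (ha : a ∉ T) :
    M.col a ∉ span F (M.col '' T) := by
  classical
  have hli := linearIndepOn_col_of_card_le hkm hM (T := insert a T)
    ((card_insert_le a T).trans hT)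
  rw [coe_insert, linearIndepOn_insert (mem_coe.not.2 ha)] at hli
  exact hli.2

theorem span_col_image_eq_top
    (hM : M.IsMDS)
    {T : Finset (Fin m)} (hT : #T = k) : span F (M.col '' T) = ⊤ := by
  rw [Set.image_eq_range]
  exact (hM T hT).span_eq_top_of_card_eq_finrank' (by simp [hT])

end Columns

section RecoverySet

variable {F : Type*} [Field F] {k n : ℕ} {G : Matrix (Fin k) (Fin n) F} {j : Fin k}
  {R : Finset (Fin n)} {l : Fin n}

theorem isRecoverySet_iff : IsRecoverySet G j R ↔
    Pi.single j 1 ∈ span F (G.col '' R) ∧ ∀ S ⊂ R, Pi.single j 1 ∉ span F (G.col '' S) :=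
  Iff.rfl

theorem isRecoverySet_singleton (hl : G.col l = Pi.single j 1) : IsRecoverySet G j {l} := by
  refine isRecoverySet_iff.2 ⟨subset_span ⟨l, by simp, hl⟩, fun S hS => ?_⟩
  rw [ssubset_singleton_iff.1 hS, coe_empty, Set.image_empty, span_empty, mem_bot]
  exact Pi.single_ne_zero_iff.2 one_ne_zero

theorem IsRecoverySet.eq_singleton_of_mem (hR : IsRecoverySet G j R) (hlR : l ∈ R)
    (hl : G.col l = Pi.single j 1) : R = {l} := by
  by_contra hne
  exact (isRecoverySet_iff.1 hR).2 {l}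
    (Finset.ssubset_iff_subset_ne.2 ⟨singleton_subset_iff.2 hlR, Ne.symm hne⟩)
    (subset_span ⟨l, by simp, hl⟩)

variable {m : ℕ} {M : Matrix (Fin k) (Fin m) F} {f : Fin n → Fin m} {a : Fin m}

theorem single_notMem_span_col_submatrix (hkm : k ≤ m)
    (hM : M.IsMDS)
    (ha : M.col a = Pi.single j 1) {S : Finset (Fin n)} (hS : #S < k) (hSa : ∀ l ∈ S, f l ≠ a) :
    Pi.single j 1 ∉ span F ((M.submatrix id f).col '' S) := by
  classical
  have := col_notMem_span_image hkm hM (T := S.image f) (card_image_le.trans_lt hS)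
    (by simpa using hSa)
  rwa [ha, coe_image, ← Set.image_comp] at this

theorem IsRecoverySet.le_card (hkm : k ≤ m)
    (hM : M.IsMDS)
    (ha : M.col a = Pi.single j 1) (hR : IsRecoverySet (M.submatrix id f) j R)
    (hRa : ∀ l ∈ R, f l ≠ a) : k ≤ #R := by
  by_contra! hRk
  exact single_notMem_span_col_submatrix hkm hM ha hRk hRa hR.1

theorem isRecoverySet_of_card_eq (hkm : k ≤ m)
    (hM : M.IsMDS)
    (ha : M.col a = Pi.single j 1) (hf : Function.Injective f) (hR : #R = k)
    (hRa : ∀ l ∈ R, f l ≠ a) : IsRecoverySet (M.submatrix id f) j R := by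
  classical
  refine isRecoverySet_iff.2 ⟨?_, fun S hS => single_notMem_span_col_submatrix hkm hM ha
    (hR ▸ card_lt_card hS) fun l hl => hRa l (hS.1 hl)⟩
  have htop := span_col_image_eq_top hM (T := R.image f) (by rwa [card_image_of_injective _ hf])
  rw [coe_image, ← Set.image_comp] at htop
  exact htop ▸ mem_top

end RecoverySet

section Gmat

variable {F : Type*} [Field F] {k n : ℕ} {M : Matrix (Fin k) (Fin (k + n)) F} {i : ℕ}

def gmatColumn (k i : ℕ) {n : ℕ} (l : Fin n) : Fin (k + n) :=
  if (l : ℕ) < i then Fin.castLE (Nat.le_add_left n k) l else Fin.natAdd k l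

theorem gmat_eq_submatrix : Gmat M i = M.submatrix id (gmatColumn k i) := by
  ext r l
  simp only [Gmat, Matrix.of_apply, Matrix.submatrix_apply, id, gmatColumn]
  split_ifs <;> rfl

theorem gmatColumn_injective : Function.Injective (gmatColumn (n := n) k i) := by
  intro a b hab
  simp only [gmatColumn, Fin.ext_iff] at hab
  ext
  split_ifs at hab <;> simp at hab <;> omega

theorem gmatColumn_eq_castAdd_iff (hkn : k ≤ n) {l : Fin n} {j : Fin k} :
    gmatColumn k i l = Fin.castAdd n j ↔ l = Fin.castLE hkn j ∧ (j : ℕ) < i := by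
  simp only [gmatColumn, Fin.ext_iff]
  split_ifs <;> simp <;> omega

end Gmat

section Allocation

variable {F : Type*} [Field F] {k n : ℕ} {G : Matrix (Fin k) (Fin n) F} {lam : Fin k → ℝ}
  {w : Fin k → Finset (Fin n) → ℝ}

theorem IsValidAllocation.sum_filter_mem_le_one (hw : IsValidAllocation G lam w) (j : Fin k)
    (l : Fin n) : ∑ R ∈ univ.filter (l ∈ ·), w j R ≤ 1 := by
  refine le_trans ?_ (hw.2.2.2 l)
  exact single_le_sum (f := fun j' => ∑ R ∈ univ.filter (l ∈ ·), w j' R)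
    (fun j' _ => sum_nonneg fun R _ => hw.1 j' R) (mem_univ j)

theorem IsValidAllocation.le_one (hw : IsValidAllocation G lam w) {j : Fin k}
    {R : Finset (Fin n)} {l : Fin n} (hl : l ∈ R) : w j R ≤ 1 :=
  (single_le_sum (fun R _ => hw.1 j R) (by simpa using hl)).trans (hw.sum_filter_mem_le_one j l)

theorem IsValidAllocation.sum_mul_card_le (hw : IsValidAllocation G lam w) (j : Fin k) :
    ∑ R, w j R * #R ≤ n :=
  calc ∑ R, w j R * #R = ∑ R, ∑ _l ∈ R, w j R := by simp [mul_comm]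
    _ = ∑ l, ∑ R ∈ univ.filter (l ∈ ·), w j R := sum_comm' (by simp)
    _ ≤ ∑ _l : Fin n, (1 : ℝ) := sum_le_sum fun l _ => hw.sum_filter_mem_le_one j l
    _ = n := by simp

theorem IsValidAllocation.mul_le_mul_card (hw : IsValidAllocation G lam w) {j : Fin k}
    {R : Finset (Fin n)} {d : ℕ} (hR : IsRecoverySet G j R → d ≤ #R) :
    d * w j R ≤ w j R * #R := by
  by_cases hrec : IsRecoverySet G j R
  · rw [mul_comm]
    exact mul_le_mul_of_nonneg_left (by exact_mod_cast hR hrec) (hw.1 j R)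
  · simp [hw.2.1 j R hrec]

theorem mul_le_of_forall_le_card {j : Fin k} {d : ℕ}
    (hG : ∀ R, IsRecoverySet G j R → d ≤ #R) (hlam : lam ∈ ServiceRegion G) :
    d * lam j ≤ n := by
  obtain ⟨-, w, hw⟩ := hlam
  rw [← hw.2.2.1 j, mul_sum]
  exact (sum_le_sum fun R _ => hw.mul_le_mul_card (hG R)).trans (hw.sum_mul_card_le j)

theorem mul_le_of_forall_ne_le_card {j : Fin k} {d : ℕ} {l : Fin n} (hd : 1 ≤ d)
    (hG : ∀ R, IsRecoverySet G j R → R ≠ {l} → d ≤ #R) (hlam : lam ∈ ServiceRegion G) :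
    d * lam j ≤ n + (d - 1) := by
  obtain ⟨-, w, hw⟩ := hlam
  have hl : w j {l} ≤ 1 := hw.le_one (mem_singleton_self l)
  have hrest : d * ∑ R ∈ univ.erase {l}, w j R ≤ ∑ R ∈ univ.erase {l}, w j R * #R := by
    rw [mul_sum]
    exact sum_le_sum fun R hR => hw.mul_le_mul_card fun hrec => hG R hrec (ne_of_mem_erase hR)
  have htotal := hw.sum_mul_card_le j
  rw [← add_sum_erase _ _ (mem_univ {l}), card_singleton, Nat.cast_one, mul_one] at htotal
  rw [← hw.2.2.1 j, ← add_sum_erase _ _ (mem_univ {l})]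
  have hd' : (1 : ℝ) ≤ d := by exact_mod_cast hd
  nlinarith

theorem le_one_of_forall_eq_singleton {j : Fin k} {l : Fin n}
    (hG : ∀ R, IsRecoverySet G j R → R = {l}) (hlam : lam ∈ ServiceRegion G) : lam j ≤ 1 := by
  obtain ⟨-, w, hw⟩ := hlam
  rw [← hw.2.2.1 j, sum_eq_single {l} (fun R _ hR => hw.2.1 j R (hR ∘ hG R)) (by simp)]
  exact hw.le_one (mem_singleton_self l)

end Allocation

section Uniform

variable {α : Type*} [DecidableEq α] {s : Finset α} {d : ℕ}

/-- Each element of `s` lies in `(#s - 1).choose (d - 1)` of the `d`-subsets of `s`, so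
these weights load every element of `s` exactly once. -/
noncomputable def uniformWeight (s : Finset α) (d : ℕ) (R : Finset α) : ℝ :=
  if R ∈ s.powersetCard d then ((#s - 1).choose (d - 1) : ℝ)⁻¹ else 0

theorem uniformWeight_nonneg (R : Finset α) : 0 ≤ uniformWeight s d R := by
  unfold uniformWeight; positivity

theorem mem_powersetCard_of_uniformWeight_ne_zero {R : Finset α} (hR : uniformWeight s d R ≠ 0) :
    R ∈ s.powersetCard d := by
  by_contra h
  exact hR (if_neg h)

theorem sum_uniformWeight [Fintype α] (hd : 0 < d) (hds : d ≤ #s) :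
    ∑ R, uniformWeight s d R = #s / d := by
  have hchoose := Nat.add_one_mul_choose_eq (#s - 1) (d - 1)
  rw [Nat.sub_add_cancel (hd.trans_le hds), Nat.sub_add_cancel hd] at hchoose
  have hpos : (0 : ℝ) < (#s - 1).choose (d - 1) := by
    exact_mod_cast Nat.choose_pos (by omega)
  simp only [uniformWeight, sum_ite_mem, univ_inter, sum_const, card_powersetCard, nsmul_eq_mul]
  rw [eq_div_iff (by positivity), ← div_eq_mul_inv, div_mul_eq_mul_div, div_eq_iff hpos.ne']
  exact_mod_cast hchoose.symm

theorem sum_filter_mem_uniformWeight [Fintype α] (hd : 0 < d) (hds : d ≤ #s) (l : α) :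
    ∑ R ∈ univ.filter (l ∈ ·), uniformWeight s d R = if l ∈ s then 1 else 0 := by
  simp only [uniformWeight, sum_ite_mem, sum_const, nsmul_eq_mul, filter_inter, univ_inter]
  split_ifs with hl
  · have hcount := card_filter_powersetCard_subset {l} s d (by simpa) (by simpa)
    simp only [singleton_subset_iff, card_singleton] at hcount
    rw [hcount, mul_inv_cancel₀ (by exact_mod_cast (Nat.choose_pos (by omega)).ne')]
  · rw [filter_false_of_mem fun R hR hlR => hl (mem_powersetCard.1 hR |>.1 hlR)]
    simp

end Uniform

section Achievability

variable {F : Type*} [Field F] {k n : ℕ} {G : Matrix (Fin k) (Fin n) F} {j : Fin k}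

theorem exists_mem_serviceRegion_of_weights (v : Finset (Fin n) → ℝ) (hv0 : ∀ R, 0 ≤ v R)
    (hvrec : ∀ R, v R ≠ 0 → IsRecoverySet G j R)
    (hvload : ∀ l, ∑ R ∈ univ.filter (l ∈ ·), v R ≤ 1) :
    ∃ lam ∈ ServiceRegion G, lam j = ∑ R, v R := by
  refine ⟨Pi.single j (∑ R, v R), ⟨fun j' => ?_, Pi.single j v, fun j' R => ?_,
    fun j' R hR => ?_, fun j' => ?_, fun l => ?_⟩, by simp⟩
  · rcases eq_or_ne j' j with rfl | hj' <;> simp [*, sum_nonneg]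
  · rcases eq_or_ne j' j with rfl | hj' <;> simp [*]
  · rcases eq_or_ne j' j with rfl | hj'
    · simpa using not_imp_comm.1 (hvrec R) hR
    · simp [hj']
  · rcases eq_or_ne j' j with rfl | hj' <;> simp [*]
  · rw [sum_eq_single j (fun j' _ hj' => by simp [hj']) (by simp)]
    simpa using hvload l

variable {l : Fin n}

theorem exists_mem_serviceRegion_eq_one (hl : G.col l = Pi.single j 1) :
    ∃ lam ∈ ServiceRegion G, lam j = 1 := by
  classical
  have h := exists_mem_serviceRegion_of_weights (G := G) (Pi.single {l} 1)
    (fun R => by rw [Pi.single_apply]; positivity)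
    (fun R hR => by
      obtain rfl : R = {l} := by_contra fun hRl => hR (Pi.single_eq_of_ne hRl 1)
      exact isRecoverySet_singleton hl)
    (fun l' => by rw [sum_pi_single']; split_ifs <;> norm_num)
  rwa [Fintype.sum_pi_single'] at h

theorem exists_mem_serviceRegion_eq_div {s : Finset (Fin n)} {d : ℕ} (hd : 0 < d)
    (hds : d ≤ #s) (hrec : ∀ R ∈ s.powersetCard d, IsRecoverySet G j R) :
    ∃ lam ∈ ServiceRegion G, lam j = #s / d := by
  rw [← sum_uniformWeight hd hds]
  refine exists_mem_serviceRegion_of_weights _ uniformWeight_nonneg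
    (fun R hR => hrec R (mem_powersetCard_of_uniformWeight_ne_zero hR)) fun l' => ?_
  rw [sum_filter_mem_uniformWeight hd hds]
  split_ifs <;> norm_num

theorem exists_mem_serviceRegion_eq_one_add_div (hl : G.col l = Pi.single j 1)
    {s : Finset (Fin n)} (hls : l ∉ s) {d : ℕ} (hd : 0 < d) (hds : d ≤ #s)
    (hrec : ∀ R ∈ s.powersetCard d, IsRecoverySet G j R) :
    ∃ lam ∈ ServiceRegion G, lam j = 1 + #s / d := by
  rw [← sum_uniformWeight hd hds, ← Fintype.sum_pi_single' ({l} : Finset (Fin n)) (1 : ℝ),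
    ← sum_add_distrib]
  refine exists_mem_serviceRegion_of_weights (G := G) (Pi.single {l} 1 + uniformWeight s d)
    (fun R => add_nonneg (by rw [Pi.single_apply]; positivity) (uniformWeight_nonneg R))
    (fun R hR => ?_) (fun l' => ?_)
  · by_cases hRl : R = {l}
    · exact hRl ▸ isRecoverySet_singleton hl
    · rw [Pi.add_apply, Pi.single_eq_of_ne hRl, zero_add] at hR
      exact hrec R (mem_powersetCard_of_uniformWeight_ne_zero hR)
  · rw [sum_congr rfl fun R _ => Pi.add_apply _ _ R, sum_add_distrib, sum_pi_single',
      sum_filter_mem_uniformWeight hd hds]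
    simp only [mem_filter, mem_univ, mem_singleton, true_and]
    split_ifs with hl' hl's
    · exact absurd (hl' ▸ hl's) hls
    all_goals norm_num

end Achievability

section GmatRegion

variable {F : Type*} [Field F] {k n : ℕ} {M : Matrix (Fin k) (Fin (k + n)) F} {i : ℕ}
  {j : Fin k} {R : Finset (Fin n)}

theorem col_castAdd_eq_single
    (hsys : ∀ j : Fin k, ∀ r : Fin k, M r (Fin.castAdd n j) = if r = j then (1 : F) else 0)
    (j : Fin k) : M.col (Fin.castAdd n j) = Pi.single j 1 := by
  ext r
  simp [hsys, Pi.single_apply]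

theorem col_gmat_castLE (hkn : k ≤ n)
    (hsys : ∀ j : Fin k, M.col (Fin.castAdd n j) = Pi.single j 1)
    (hji : (j : ℕ) < i) : (Gmat M i).col (Fin.castLE hkn j) = Pi.single j 1 := by
  rw [gmat_eq_submatrix, Matrix.col_submatrix, (gmatColumn_eq_castAdd_iff hkn).2 ⟨rfl, hji⟩]
  exact hsys j

theorem IsRecoverySet.le_card_gmat (hkn : k ≤ n)
    (hsys : ∀ j : Fin k, M.col (Fin.castAdd n j) = Pi.single j 1) (hMDS : M.IsMDS)
    (hR : IsRecoverySet (Gmat M i) j R) (hRj : ∀ l ∈ R, ¬ (l = Fin.castLE hkn j ∧ (j : ℕ) < i)) :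
    k ≤ #R := by
  rw [gmat_eq_submatrix] at hR
  exact hR.le_card (Nat.le_add_right k n) hMDS (hsys j)
    fun l hl h => hRj l hl ((gmatColumn_eq_castAdd_iff hkn).1 h)

theorem isRecoverySet_gmat_of_card_eq (hkn : k ≤ n)
    (hsys : ∀ j : Fin k, M.col (Fin.castAdd n j) = Pi.single j 1) (hMDS : M.IsMDS)
    (hR : #R = k) (hRj : ∀ l ∈ R, ¬ (l = Fin.castLE hkn j ∧ (j : ℕ) < i)) :
    IsRecoverySet (Gmat M i) j R := by
  rw [gmat_eq_submatrix]
  exact isRecoverySet_of_card_eq (Nat.le_add_right k n) hMDS (hsys j)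
    gmatColumn_injective hR fun l hl h => hRj l hl ((gmatColumn_eq_castAdd_iff hkn).1 h)

theorem IsRecoverySet.le_card_gmat_of_ne_singleton (hkn : k ≤ n)
    (hsys : ∀ j : Fin k, M.col (Fin.castAdd n j) = Pi.single j 1) (hMDS : M.IsMDS)
    (hR : IsRecoverySet (Gmat M i) j R) (hne : R ≠ {Fin.castLE hkn j}) : k ≤ #R :=
  hR.le_card_gmat hkn hsys hMDS fun _ hl ⟨hl', hji⟩ =>
    hne (hR.eq_singleton_of_mem (hl' ▸ hl) (col_gmat_castLE hkn hsys hji))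

theorem isGreatest_gmat_of_not_lt (hkn : k ≤ n)
    (hsys : ∀ j : Fin k, M.col (Fin.castAdd n j) = Pi.single j 1) (hMDS : M.IsMDS)
    (hji : ¬ (j : ℕ) < i) :
    IsGreatest {x | ∃ lam ∈ ServiceRegion (Gmat M i), lam j = x} (n / k) := by
  have hk : (0 : ℝ) < k := by exact_mod_cast j.pos
  refine ⟨?_, ?_⟩
  · simpa using exists_mem_serviceRegion_eq_div (s := univ) j.pos (by simpa) fun R hR =>
      isRecoverySet_gmat_of_card_eq hkn hsys hMDS (mem_powersetCard.1 hR).2 fun _ _ h => hji h.2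
  · rintro _ ⟨lam, hlam, rfl⟩
    rw [le_div_iff₀' hk]
    exact mul_le_of_forall_le_card
      (fun R hR => hR.le_card_gmat hkn hsys hMDS fun _ _ h => hji h.2) hlam

theorem isGreatest_gmat_of_lt_of_eq (hkn : k ≤ n)
    (hsys : ∀ j : Fin k, M.col (Fin.castAdd n j) = Pi.single j 1) (hMDS : M.IsMDS)
    (hji : (j : ℕ) < i) (hnk : n = k) :
    IsGreatest {x | ∃ lam ∈ ServiceRegion (Gmat M i), lam j = x} 1 := by
  have hcol := col_gmat_castLE hkn hsys hji
  refine ⟨exists_mem_serviceRegion_eq_one hcol, ?_⟩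
  rintro _ ⟨lam, hlam, rfl⟩
  refine le_one_of_forall_eq_singleton (l := Fin.castLE hkn j) (fun R hR => ?_) hlam
  by_contra hne
  have hRuniv : R = univ :=
    eq_univ_of_card R (le_antisymm (card_le_univ R) (by
      simpa [hnk] using hR.le_card_gmat_of_ne_singleton hkn hsys hMDS hne))
  exact hne (hR.eq_singleton_of_mem (hRuniv ▸ mem_univ _) hcol)

theorem isGreatest_gmat_of_lt_of_lt (hkn : k ≤ n)
    (hsys : ∀ j : Fin k, M.col (Fin.castAdd n j) = Pi.single j 1) (hMDS : M.IsMDS)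
    (hji : (j : ℕ) < i) (hlt : k < n) :
    IsGreatest {x | ∃ lam ∈ ServiceRegion (Gmat M i), lam j = x} (1 + (n - 1) / k) := by
  have hk : (0 : ℝ) < k := by exact_mod_cast j.pos
  have hcard : #(univ.erase (Fin.castLE hkn j)) = n - 1 := by simp
  refine ⟨?_, ?_⟩
  · have h := exists_mem_serviceRegion_eq_one_add_div (col_gmat_castLE hkn hsys hji)
      (notMem_erase _ univ) j.pos (by omega) fun R hR => ?_
    · rwa [hcard, Nat.cast_sub (by omega), Nat.cast_one] at h
    · obtain ⟨hRs, hRk⟩ := mem_powersetCard.1 hR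
      exact isRecoverySet_gmat_of_card_eq hkn hsys hMDS hRk fun _ hl h =>
        notMem_erase _ univ (h.1 ▸ hRs hl)
  · rintro _ ⟨lam, hlam, rfl⟩
    have h := mul_le_of_forall_ne_le_card (j := j) j.pos
      (fun R hR hne => hR.le_card_gmat_of_ne_singleton hkn hsys hMDS hne) hlam
    rw [one_add_div hk.ne', le_div_iff₀' hk]
    linarith

end GmatRegion

theorem maximal_achievable_demand_general
    {F : Type*} [Field F] {k n : ℕ} (hkn : k ≤ n)
    (M : Matrix (Fin k) (Fin (k + n)) F)
    (hsys : ∀ j : Fin k, ∀ r : Fin k, M r (Fin.castAdd n j) = if r = j then (1 : F) else 0)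
    (hMDS : ∀ S : Finset (Fin (k + n)), S.card = k →
      LinearIndependent F (fun l : S => Mᵀ (l : Fin (k + n))))
    (i : ℕ) (j : Fin k) :
    IsGreatest {x : ℝ | ∃ lam ∈ ServiceRegion (Gmat M i : Matrix (Fin k) (Fin n) F), lam j = x}
      (if (j : ℕ) < i then (if n = k then (1 : ℝ) else 1 + ((n : ℝ) - 1) / (k : ℝ))
       else (n : ℝ) / (k : ℝ)) := by
  have hcol := col_castAdd_eq_single hsys
  split_ifs with hji hnk
  · exact isGreatest_gmat_of_lt_of_eq hkn hcol hMDS hji hnk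
  · exact isGreatest_gmat_of_lt_of_lt hkn hcol hMDS hji (lt_of_le_of_ne hkn (Ne.symm hnk))
  · exact isGreatest_gmat_of_not_lt hkn hcol hMDS hji

theorem maximal_achievable_demand
    {F : Type*} [Field F] [Fintype F] {k n : ℕ} (hk : 2 ≤ k) (hkn : k ≤ n)
    (hq : k + n + 1 ≤ Fintype.card F)
    (M : Matrix (Fin k) (Fin (k + n)) F)
    (hsys : ∀ j : Fin k, ∀ r : Fin k, M r (Fin.castAdd n j) = if r = j then (1 : F) else 0)
    (hMDS : ∀ S : Finset (Fin (k + n)), S.card = k →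
      LinearIndependent F (fun l : S => Mᵀ (l : Fin (k + n))))
    (i : ℕ) (hik : i ≤ k) (j : Fin k) :
    IsGreatest {x : ℝ | ∃ lam ∈ ServiceRegion (Gmat M i : Matrix (Fin k) (Fin n) F), lam j = x}
      (if (j : ℕ) < i then (if n = k then (1 : ℝ) else 1 + ((n : ℝ) - 1) / (k : ℝ))
       else (n : ℝ) / (k : ℝ)) :=
  maximal_achievable_demand_general hkn M hsys hMDS i j
end

section
/- The service rate region S_i(n,k) contains the maximal achievable simplex: the convex hull of the origin together with the k points λ_j^max·e_j (j = 1,…,k) is contained in S_i(n,k), where λ_j^max equals 1 + (n−1)/k if j ≤ i and n ≥ k+1, equals 1 if j ≤ i and n = k, and equals n/k if j > i, and e_j denotes the j-th standard basis vector of R^k. -/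
/-!
The service rate region is convex and contains `0`, so it suffices to serve each vertex
`λ_j^max e_j` on its own. Every `k` columns of `M` form a basis, so every `k`-set of servers
whose columns avoid the systematic column `e_j` is a recovery set for `j`. Spreading the
requests for `j` evenly over all `k`-subsets of a set `s` of such servers loads each server of
`s` exactly once while serving rate `#s / k`. For `j ≥ i` take `s` to be all `n` servers. For
`j < i` the server holding `e_j` serves rate `1` by itself, and when `n > k` the other `n - 1`
servers serve a further `(n - 1) / k`.
-/

open Matrix

open Finset

section ServiceRegion

variable {F : Type*} [Field F] {k n : ℕ} (G : Matrix (Fin k) (Fin n) F)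

theorem zero_mem_serviceRegion : (0 : Fin k → ℝ) ∈ ServiceRegion G :=
  ⟨fun _ => le_rfl, 0, fun _ _ => le_rfl, fun _ _ _ => rfl, fun _ => by simp, fun _ => by simp⟩

theorem convex_serviceRegion : Convex ℝ (ServiceRegion G) := by
  rintro x ⟨hx, w₁, hw₁, hrec₁, hsum₁, hload₁⟩ y ⟨hy, w₂, hw₂, hrec₂, hsum₂, hload₂⟩ a b ha hb hab
  refine ⟨fun j => by simp only [Pi.add_apply, Pi.smul_apply, smul_eq_mul]; positivity [hx j, hy j],
    a • w₁ + b • w₂, fun j R => ?_, fun j R hR => ?_, fun j => ?_, fun l => ?_⟩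
  · simp only [Pi.add_apply, Pi.smul_apply, smul_eq_mul]
    positivity [hw₁ j R, hw₂ j R]
  · simp [hrec₁ j R hR, hrec₂ j R hR]
  · simp [sum_add_distrib, ← mul_sum, hsum₁ j, hsum₂ j]
  · calc ∑ j, ∑ R ∈ univ.filter (l ∈ ·), (a • w₁ + b • w₂) j R
        = a * ∑ j, ∑ R ∈ univ.filter (l ∈ ·), w₁ j R
          + b * ∑ j, ∑ R ∈ univ.filter (l ∈ ·), w₂ j R := by
          simp only [Pi.add_apply, Pi.smul_apply, smul_eq_mul, mul_sum, sum_add_distrib]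
      _ ≤ a * 1 + b * 1 := by gcongr; exacts [hload₁ l, hload₂ l]
      _ = 1 := by rw [mul_one, mul_one, hab]

theorem sum_smul_single_mem_serviceRegion (j : Fin k) {v : Finset (Fin n) → ℝ}
    (hv : ∀ R, 0 ≤ v R) (hrec : ∀ R, v R ≠ 0 → IsRecoverySet G j R)
    (hload : ∀ l, ∑ R ∈ univ.filter (l ∈ ·), v R ≤ 1) :
    (∑ R, v R) • (Pi.single j 1 : Fin k → ℝ) ∈ ServiceRegion G := by
  classical
  refine ⟨fun j' => ?_, Pi.single j v, fun j' R => ?_, fun j' R hR => ?_, fun j' => ?_,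
    fun l => ?_⟩
  · rw [Pi.smul_apply, smul_eq_mul]
    have : (0 : Fin k → ℝ) ≤ Pi.single j 1 := Pi.single_nonneg.2 zero_le_one
    exact mul_nonneg (sum_nonneg fun R _ => hv R) (this j')
  · rcases eq_or_ne j' j with rfl | hj
    · simpa using hv R
    · simp [hj]
  · rcases eq_or_ne j' j with rfl | hj
    · simpa using mt (hrec R) hR
    · simp [hj]
  · rcases eq_or_ne j' j with rfl | hj
    · simp
    · simp [hj]
  · rw [sum_comm]
    simpa [← Finset.sum_apply] using hload l

end ServiceRegion

section KSubsets

variable {α : Type*} [DecidableEq α]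

theorem card_filter_mem_powersetCard_succ {s : Finset α} {l : α} (hl : l ∈ s) (m : ℕ) :
    #{R ∈ s.powersetCard (m + 1) | l ∈ R} = (#s - 1).choose m := by
  rw [← card_erase_of_mem hl, ← card_powersetCard]
  refine card_bij' (fun R _ => R.erase l) (fun T _ => insert l T) (fun R hR => ?_)
    (fun T hT => ?_) (fun R hR => insert_erase (mem_filter.1 hR).2) (fun T hT => ?_)
  · obtain ⟨⟨hRs, hcard⟩, hlR⟩ := by simpa only [mem_filter, mem_powersetCard] using hR
    simp [mem_powersetCard, erase_subset_erase l hRs, card_erase_of_mem hlR, hcard]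
  · obtain ⟨hTs, hcard⟩ := mem_powersetCard.1 hT
    have hlT : l ∉ T := fun h => notMem_erase l s (hTs h)
    simp only [mem_filter, mem_powersetCard, mem_insert_self, and_true,
      card_insert_of_notMem hlT, hcard]
    exact insert_subset hl (hTs.trans (erase_subset l s))
  · exact erase_insert fun h => notMem_erase l s ((mem_powersetCard.1 hT).1 h)

-- `(#s - 1).choose (k - 1)` is the number of `k`-subsets of `s` through a given element of `s`.
noncomputable def kSubsetWeight (s : Finset α) (k : ℕ) (R : Finset α) : ℝ :=
  if R ∈ s.powersetCard k then ((#s - 1).choose (k - 1) : ℝ)⁻¹ else 0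

variable {s : Finset α} {k : ℕ}

theorem kSubsetWeight_nonneg (R : Finset α) : 0 ≤ kSubsetWeight s k R := by
  unfold kSubsetWeight; split_ifs <;> positivity

theorem mem_powersetCard_of_kSubsetWeight_ne_zero {R : Finset α}
    (h : kSubsetWeight s k R ≠ 0) : R ∈ s.powersetCard k := by
  by_contra hR; exact h (if_neg hR)

variable [Fintype α]

theorem sum_filter_mem_kSubsetWeight (hk : 0 < k) (hks : k ≤ #s) (l : α) :
    ∑ R ∈ univ.filter (l ∈ ·), kSubsetWeight s k R = if l ∈ s then 1 else 0 := by
  unfold kSubsetWeight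
  rw [sum_ite_mem, filter_inter, univ_inter, sum_const, nsmul_eq_mul]
  split_ifs with hl
  · obtain ⟨m, rfl⟩ := Nat.exists_eq_add_of_le' hk
    have hpos : 0 < (#s - 1).choose m := Nat.choose_pos (by omega)
    rw [card_filter_mem_powersetCard_succ hl, Nat.add_sub_cancel]
    exact mul_inv_cancel₀ (by positivity)
  · rw [filter_false_of_mem fun R hR hlR => hl ((mem_powersetCard.1 hR).1 hlR)]
    simp

theorem sum_kSubsetWeight (hk : 0 < k) (hks : k ≤ #s) :
    ∑ R, kSubsetWeight s k R = #s / k := by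
  unfold kSubsetWeight
  rw [sum_ite_mem, univ_inter, sum_const, nsmul_eq_mul, card_powersetCard]
  obtain ⟨m, rfl⟩ := Nat.exists_eq_add_of_le' hk
  have hpos : 0 < (#s - 1).choose m := Nat.choose_pos (by omega)
  have key : (#s : ℝ) * (#s - 1).choose m = (#s).choose (m + 1) * (m + 1) := by
    have := Nat.add_one_mul_choose_eq (#s - 1) m
    rw [Nat.sub_add_cancel (by omega)] at this
    exact_mod_cast this
  rw [Nat.add_sub_cancel]
  field_simp
  push_cast
  linarith

end KSubsets

section MDS

variable {F ι V : Type*} [Field F] [AddCommGroup V] [Module F V]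
  {u : ι → V} (hu : ∀ S : Finset ι, #S = Module.finrank F V → LinearIndepOn F u S)
include hu

theorem linearIndepOn_of_card_le [Fintype ι] {T : Finset ι} (hT : #T ≤ Module.finrank F V)
    (hι : Module.finrank F V ≤ Fintype.card ι) : LinearIndepOn F u T := by
  obtain ⟨S, hTS, hS⟩ := exists_superset_card_eq hT hι
  exact (hu S hS).mono (coe_subset.2 hTS)

theorem span_image_eq_top_of_card_eq [FiniteDimensional F V] {T : Finset ι}
    (hT : #T = Module.finrank F V) : Submodule.span F (u '' T) = ⊤ := by
  rw [Set.image_eq_range]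
  exact (hu T hT).span_eq_top_of_card_eq_finrank' (by simpa using hT)

theorem notMem_span_image_of_card_lt [Fintype ι] [DecidableEq ι] {T : Finset ι} {a : ι}
    (hT : #T < Module.finrank F V) (haT : a ∉ T) (hι : Module.finrank F V ≤ Fintype.card ι) :
    u a ∉ Submodule.span F (u '' T) := by
  have := linearIndepOn_of_card_le hu (T := insert a T)
    (by rw [card_insert_of_notMem haT]; omega) hι
  rw [coe_insert, linearIndepOn_insert (mod_cast haT)] at this
  exact this.2

end MDS

section RecoverySets

variable {F ι : Type*} [Field F] {k n : ℕ} {G : Matrix (Fin k) (Fin n) F}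

theorem isRecoverySet_of_card_eq_s7 [Fintype ι] {u : ι → Fin k → F} {f : Fin n → ι}
    (hG : ∀ l, Gᵀ l = u (f l)) (hf : f.Injective)
    (hu : ∀ S : Finset ι, #S = k → LinearIndepOn F u S) {j : Fin k} {a : ι}
    (ha : u a = Pi.single j 1) {R : Finset (Fin n)} (hR : #R = k) (haR : ∀ l ∈ R, f l ≠ a) :
    IsRecoverySet G j R := by
  classical
  replace hu : ∀ S : Finset ι, #S = Module.finrank F (Fin k → F) → LinearIndepOn F u S := by
    simpa using hu
  have hι : Module.finrank F (Fin k → F) ≤ Fintype.card ι := by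
    simpa [← hR] using (card_le_univ R).trans (Fintype.card_le_of_injective f hf)
  have himage (S : Finset (Fin n)) : Gᵀ '' S = u '' (S.image f : Finset ι) := by
    rw [coe_image, ← Set.image_comp]
    exact Set.image_congr fun l _ => hG l
  refine ⟨?_, fun S hS => ?_⟩
  · rw [himage, span_image_eq_top_of_card_eq hu (by simp [card_image_of_injective _ hf, hR])]
    trivial
  · rw [himage, ← ha]
    refine notMem_span_image_of_card_lt hu ?_ ?_ hι
    · simpa [card_image_of_injective _ hf, ← hR] using card_lt_card hS
    · simpa using fun l hl => haR l (hS.subset hl)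

theorem isRecoverySet_singleton_s7 {j : Fin k} {p : Fin n} (hp : Gᵀ p = Pi.single j 1) :
    IsRecoverySet G j {p} := by
  refine ⟨Submodule.subset_span ⟨p, mem_coe.2 (mem_singleton_self p), hp⟩, fun S hS => ?_⟩
  rw [ssubset_singleton_iff.1 hS, coe_empty, show Gᵀ '' ∅ = ∅ from Set.image_empty _,
    Submodule.span_empty, Submodule.mem_bot]
  exact Pi.single_ne_zero_iff.2 one_ne_zero

end RecoverySets

section Gmat

variable {F : Type*} [Field F] {k n : ℕ}

def gmatColumnIndex (k : ℕ) {n : ℕ} (i : ℕ) (l : Fin n) : Fin (k + n) :=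
  if (l : ℕ) < i then Fin.castLE (Nat.le_add_left n k) l else Fin.natAdd k l

theorem transpose_Gmat_apply (M : Matrix (Fin k) (Fin (k + n)) F) (i : ℕ) (l : Fin n) :
    (Gmat M i)ᵀ l = Mᵀ (gmatColumnIndex k i l) := by
  funext r
  by_cases h : (l : ℕ) < i <;> simp [Gmat, gmatColumnIndex, h] <;> rfl

theorem gmatColumnIndex_injective (i : ℕ) : (gmatColumnIndex k (n := n) i).Injective := by
  intro l l' h
  have := congrArg Fin.val h
  simp only [gmatColumnIndex] at this
  split_ifs at this <;> simp at this <;> omega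

theorem gmatColumnIndex_ne_castAdd {i : ℕ} {j : Fin k} {l : Fin n}
    (h : (j : ℕ) < i → (l : ℕ) ≠ j) : gmatColumnIndex k i l ≠ Fin.castAdd n j := by
  intro hl
  have := congrArg Fin.val hl
  simp only [gmatColumnIndex] at this
  split_ifs at this <;> simp at this <;> omega

end Gmat

section SystematicMDS

variable {F : Type*} [Field F] {k n : ℕ} {M : Matrix (Fin k) (Fin (k + n)) F}
  (hsys : ∀ j : Fin k, ∀ r : Fin k, M r (Fin.castAdd n j) = if r = j then (1 : F) else 0)
  (hMDS : ∀ S : Finset (Fin (k + n)), S.card = k →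
    LinearIndependent F (fun l : S => Mᵀ (l : Fin (k + n))))
  {i : ℕ} {j : Fin k}

include hsys in
theorem transpose_apply_castAdd (j : Fin k) : Mᵀ (Fin.castAdd n j) = Pi.single j 1 := by
  funext r
  rw [transpose_apply, hsys j r, Pi.single_apply]

include hsys hMDS in
theorem isRecoverySet_Gmat_of_kSubsetWeight_ne_zero {s : Finset (Fin n)}
    (hs : (j : ℕ) < i → ∀ l ∈ s, (l : ℕ) ≠ j) {R : Finset (Fin n)}
    (hR : kSubsetWeight s k R ≠ 0) : IsRecoverySet (Gmat M i) j R := by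
  obtain ⟨hRs, hcard⟩ := mem_powersetCard.1 (mem_powersetCard_of_kSubsetWeight_ne_zero hR)
  exact isRecoverySet_of_card_eq_s7 (transpose_Gmat_apply M i) (gmatColumnIndex_injective i) hMDS
    (transpose_apply_castAdd hsys j) hcard
    fun l hl => gmatColumnIndex_ne_castAdd fun hj => hs hj l (hRs hl)

include hsys in
theorem transpose_Gmat_apply_of_lt (hkn : k ≤ n) (hj : (j : ℕ) < i) :
    (Gmat M i)ᵀ ⟨j, j.isLt.trans_le hkn⟩ = Pi.single j 1 := by
  rw [transpose_Gmat_apply, ← transpose_apply_castAdd hsys j]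
  congr 1
  ext
  simp [gmatColumnIndex, hj]

include hsys in
theorem single_mem_serviceRegion_Gmat (hkn : k ≤ n) (hj : (j : ℕ) < i) :
    (Pi.single j 1 : Fin k → ℝ) ∈ ServiceRegion (Gmat M i) := by
  classical
  simpa using sum_smul_single_mem_serviceRegion (Gmat M i) j
    (v := Pi.single {⟨j, j.isLt.trans_le hkn⟩} 1)
    (fun R => by rw [Pi.single_apply]; positivity)
    (fun R hR => by
      rw [Pi.single_apply, ite_ne_right_iff] at hR
      exact hR.1 ▸ isRecoverySet_singleton_s7 (transpose_Gmat_apply_of_lt hsys hkn hj))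
    (fun l => by rw [sum_pi_single']; split_ifs <;> norm_num)

include hsys hMDS in
theorem one_add_div_smul_single_mem_serviceRegion_Gmat (hkn : k < n) (hj : (j : ℕ) < i) :
    (1 + ((n : ℝ) - 1) / k) • (Pi.single j 1 : Fin k → ℝ) ∈ ServiceRegion (Gmat M i) := by
  classical
  set p : Fin n := ⟨j, j.isLt.trans hkn⟩
  have hcard : #(univ.erase p) = n - 1 := by simp
  have := sum_smul_single_mem_serviceRegion (Gmat M i) j
    (v := Pi.single {p} 1 + kSubsetWeight (univ.erase p) k)
    (fun R => add_nonneg (by rw [Pi.single_apply]; positivity) (kSubsetWeight_nonneg R))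
    (fun R hR => by
      by_cases hRp : R = {p}
      · exact hRp ▸ isRecoverySet_singleton_s7 (transpose_Gmat_apply_of_lt hsys hkn.le hj)
      · refine isRecoverySet_Gmat_of_kSubsetWeight_ne_zero hsys hMDS (s := univ.erase p)
          (fun _ l hl hlj => ne_of_mem_erase hl (Fin.ext hlj : l = p)) ?_
        simpa [Pi.single_eq_of_ne hRp] using hR)
    (fun l => by
      simp only [Pi.add_apply]
      rw [sum_add_distrib, sum_pi_single', sum_filter_mem_kSubsetWeight j.pos (by omega)]
      by_cases hlp : l = p <;> simp [hlp])
  simp only [Pi.add_apply] at this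
  rwa [sum_add_distrib, sum_pi_single', sum_kSubsetWeight j.pos (by omega), hcard,
    if_pos (mem_univ _), Nat.cast_sub (by omega), Nat.cast_one] at this

include hsys hMDS in
theorem div_smul_single_mem_serviceRegion_Gmat (hkn : k ≤ n) (hj : i ≤ (j : ℕ)) :
    ((n : ℝ) / k) • (Pi.single j 1 : Fin k → ℝ) ∈ ServiceRegion (Gmat M i) := by
  classical
  have := sum_smul_single_mem_serviceRegion (Gmat M i) j (v := kSubsetWeight univ k)
    kSubsetWeight_nonneg
    (fun R => isRecoverySet_Gmat_of_kSubsetWeight_ne_zero hsys hMDS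
      fun hj' => absurd hj' (by omega))
    (fun l => by rw [sum_filter_mem_kSubsetWeight j.pos (by simpa)]; split_ifs <;> norm_num)
  rwa [sum_kSubsetWeight j.pos (by simpa), card_univ, Fintype.card_fin] at this

end SystematicMDS

theorem maximal_achievable_simplex_subset_srr_general
    {F : Type*} [Field F] {k n : ℕ} (hkn : k ≤ n)
    (M : Matrix (Fin k) (Fin (k + n)) F)
    (hsys : ∀ j : Fin k, ∀ r : Fin k, M r (Fin.castAdd n j) = if r = j then (1 : F) else 0)
    (hMDS : ∀ S : Finset (Fin (k + n)), S.card = k →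
      LinearIndependent F (fun l : S => Mᵀ (l : Fin (k + n))))
    (i : ℕ) :
    convexHull ℝ (insert (0 : Fin k → ℝ)
        (Set.range fun j : Fin k =>
          (if (j : ℕ) < i then (if n = k then (1 : ℝ) else 1 + ((n : ℝ) - 1) / (k : ℝ))
           else (n : ℝ) / (k : ℝ)) • (Pi.single j 1 : Fin k → ℝ)))
      ⊆ ServiceRegion (Gmat M i : Matrix (Fin k) (Fin n) F) := by
  refine convexHull_min ?_ (convex_serviceRegion _)
  rintro _ (rfl | ⟨j, rfl⟩)
  · exact zero_mem_serviceRegion _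
  dsimp only
  by_cases hj : (j : ℕ) < i
  · rw [if_pos hj]
    rcases hkn.eq_or_lt with rfl | hkn
    · simpa using single_mem_serviceRegion_Gmat hsys le_rfl hj
    · rw [if_neg hkn.ne']
      exact one_add_div_smul_single_mem_serviceRegion_Gmat hsys hMDS hkn hj
  · rw [if_neg hj]
    exact div_smul_single_mem_serviceRegion_Gmat hsys hMDS hkn (not_lt.1 hj)

theorem maximal_achievable_simplex_subset_srr
    {F : Type*} [Field F] [Fintype F] {k n : ℕ} (hk : 2 ≤ k) (hkn : k ≤ n)
    (hq : k + n + 1 ≤ Fintype.card F)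
    (M : Matrix (Fin k) (Fin (k + n)) F)
    (hsys : ∀ j : Fin k, ∀ r : Fin k, M r (Fin.castAdd n j) = if r = j then (1 : F) else 0)
    (hMDS : ∀ S : Finset (Fin (k + n)), S.card = k →
      LinearIndependent F (fun l : S => Mᵀ (l : Fin (k + n))))
    (i : ℕ) (hik : i ≤ k) :
    convexHull ℝ (insert (0 : Fin k → ℝ)
        (Set.range fun j : Fin k =>
          (if (j : ℕ) < i then (if n = k then (1 : ℝ) else 1 + ((n : ℝ) - 1) / (k : ℝ))
           else (n : ℝ) / (k : ℝ)) • (Pi.single j 1 : Fin k → ℝ)))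
      ⊆ ServiceRegion (Gmat M i : Matrix (Fin k) (Fin n) F) :=
  maximal_achievable_simplex_subset_srr_general hkn M hsys hMDS i
end
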